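/- Let G be any n-lift of a d-regular graph H on vertex set [h]. Then for every induced subgraph G′ of G with |V(G′)| ≤ n − h√n, one has λ*(G) ≥ λ(G′) − 7/2, where λ(G′) is the largest eigenvalue of the adjacency matrix of G′. -/

import Mathlib

open scoped BigOperators
open scoped Classical

namespace RandomLifts

noncomputable section

/-- Probability of an event under the uniform measure on a finite type. -/
def unifProb {Ω : Type*} [Fintype Ω] (p : Ω → Prop) : ℝ :=
  letI := Classical.decPred p
  ((Finset.univ.filter p).card : ℝ) / (Fintype.card Ω : ℝ)

/-- The sample space of a random `n`-lift of a graph on `Fin h`: an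
independent, uniformly random permutation for each (ordered) pair of fibres
(only the permutations attached to pairs `i < i'` with `i ~ i'` are used). -/
abbrev LiftSpace (h n : ℕ) := Fin h → Fin h → Equiv.Perm (Fin n)

/-- The `n`-lift of `H` determined by the matchings `ω`. -/
def liftGraph {h n : ℕ} (H : SimpleGraph (Fin h)) (ω : LiftSpace h n) :
    SimpleGraph (Fin h × Fin n) where
  Adj u v := H.Adj u.1 v.1 ∧
    ((u.1 < v.1 ∧ v.2 = ω u.1 v.1 u.2) ∨ (v.1 < u.1 ∧ u.2 = ω v.1 u.1 v.2))
  symm := by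
    constructor
    intro u v huv
    exact ⟨huv.1.symm, huv.2.symm⟩
  loopless := by
    constructor
    intro u hu
    exact H.ne_of_adj hu.1 rfl

/-- The adjacency matrix of a graph, with real entries. -/
def adjMat {V : Type*} (G : SimpleGraph V) : Matrix V V ℝ :=
  fun u v => if G.Adj u v then 1 else 0

/-- The largest eigenvalue of (the adjacency matrix of) a graph on a finite
vertex set. -/
def lambdaMax {V : Type*} [Fintype V] (G : SimpleGraph V) : ℝ :=
  sSup {μ : ℝ | ∃ x : V → ℝ, x ≠ 0 ∧ (adjMat G).mulVec x = μ • x}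

/-- `λ*(G)`: the largest absolute value of a *new* eigenvalue of a lift,
i.e. of an eigenvalue admitting an eigenvector balanced on every fibre. -/
def lambdaStar {h n : ℕ} (G : SimpleGraph (Fin h × Fin n)) : ℝ :=
  sSup {r : ℝ | ∃ (μ : ℝ) (x : Fin h × Fin n → ℝ), x ≠ 0 ∧
    (adjMat G).mulVec x = μ • x ∧ (∀ i : Fin h, ∑ j : Fin n, x (i, j) = 0) ∧ r = |μ|}

/-- The matrix `M̄` of edge probabilities. -/
def Mbar (h n : ℕ) (H : SimpleGraph (Fin h)) :
    Matrix (Fin h × Fin n) (Fin h × Fin n) ℝ :=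
  fun u v => if H.Adj u.1 v.1 then 1 / (n : ℝ) else 0

/-- `N = M − M̄`. -/
def Nmat {h n : ℕ} (H : SimpleGraph (Fin h)) (G : SimpleGraph (Fin h × Fin n)) :
    Matrix (Fin h × Fin n) (Fin h × Fin n) ℝ :=
  adjMat G - Mbar h n H

/-- `⟨x,x⟩_A`. -/
def quadForm {V : Type*} [Fintype V] (A : Matrix V V ℝ) (x : V → ℝ) : ℝ :=
  ∑ u, ∑ v, x u * A u v * x v

/-- `⟨x,x⟩_{A,E}`: the quadratic form restricted to pairs of entries lying in
`E ⊆ ℝ²`. -/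
def quadFormOn {V : Type*} [Fintype V] (A : Matrix V V ℝ) (E : Set (ℝ × ℝ))
    (x : V → ℝ) : ℝ :=
  ∑ u, ∑ v, if (x u, x v) ∈ E then x u * A u v * x v else 0

/-- The set `E* = {(x₁,x₂) : x₁,x₂ > 0, d^{-1/2} < x₁/x₂ < d^{1/2}}`. -/
def Estar (d : ℕ) : Set (ℝ × ℝ) :=
  {p | 0 < p.1 ∧ 0 < p.2 ∧ (Real.sqrt d)⁻¹ < p.1 / p.2 ∧ p.1 / p.2 < Real.sqrt d}

/-- `D^{>0} = {2^i/√(nh) : i ≥ 1}`. -/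
def Dpos (n h : ℕ) : Set ℝ := {w | ∃ i : ℕ, 1 ≤ i ∧ w = 2 ^ i / Real.sqrt (n * h)}

/-- `D⁺ = {0} ∪ D^{>0}`. -/
def Dplus (n h : ℕ) : Set ℝ := insert 0 (Dpos n h)

/-- Membership in the set `Z` of dyadic test vectors. -/
def memZ (d h n : ℕ) (x : Fin h × Fin n → ℝ) : Prop :=
  (∑ v, x v ^ 2) ≤ 10 ∧ (∀ v, x v ∈ Dplus n h) ∧
    ∀ u v, x v ≠ 0 → x u ≤ (d : ℝ) * x v

/-- A `Z`-type. -/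
def IsZType (d h n : ℕ) (a : Fin h → ℝ → ℕ) : Prop :=
  (∀ i w, a i w ≠ 0 → w ∈ Dplus n h) ∧
  (∀ i, (∑ᶠ w : ℝ, a i w) ≤ n) ∧
  (∃ w₀ ∈ Dpos n h, ∀ i w, a i w ≠ 0 → w₀ ≤ w ∧ w ≤ w₀ * d) ∧
  ((∑ i : Fin h, ∑ᶠ w : ℝ, w ^ 2 * (a i w : ℝ)) ≤ 10)

/-- A pattern `(a,e)`. -/
def IsPattern (d h n : ℕ) (H : SimpleGraph (Fin h)) (a : Fin h → ℝ → ℕ)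
    (e : Fin h → ℝ → Fin h → ℝ → ℕ) : Prop :=
  IsZType d h n a ∧
  (∀ i w i' w', e i w i' w' = e i' w' i w) ∧
  (∀ i w i' w', e i w i' w' ≤ min (a i w) (a i' w')) ∧
  (∀ i w i' w', ¬H.Adj i i' → e i w i' w' = 0)

/-- The adjacency relation of the graph `Γ`. -/
def gammaAdj (d h n : ℕ) (H : SimpleGraph (Fin h)) (p q : Fin h × ℝ) : Prop :=
  H.Adj p.1 q.1 ∧ p.2 ∈ Dpos n h ∧ q.2 ∈ Dpos n h ∧
    (Real.sqrt d)⁻¹ < p.2 / q.2 ∧ p.2 / q.2 < Real.sqrt d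

/-- The summand `w w' (e_{i,w,i',w'} − a_{i,w}a_{i',w'}/n)` appearing in the
potency, for an ordered pair of `Γ`-adjacent vertices. -/
def potTerm (d h n : ℕ) (H : SimpleGraph (Fin h)) (a : Fin h → ℝ → ℕ)
    (e : Fin h → ℝ → Fin h → ℝ → ℕ) (p q : Fin h × ℝ) : ℝ :=
  if gammaAdj d h n H p q then
    p.2 * q.2 * ((e p.1 p.2 q.1 q.2 : ℝ) - (a p.1 p.2 : ℝ) * (a q.1 q.2 : ℝ) / n)
  else 0

/-- The potency `p(a,e)` of a pattern: the sum over unordered edges of `Γ`,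
realised as half of the sum over ordered pairs. -/
def potency (d h n : ℕ) (H : SimpleGraph (Fin h)) (a : Fin h → ℝ → ℕ)
    (e : Fin h → ℝ → Fin h → ℝ → ℕ) : ℝ :=
  |(1 / 2 : ℝ) * ∑ i : Fin h, ∑ i' : Fin h, ∑ᶠ w : ℝ, ∑ᶠ w' : ℝ,
      potTerm d h n H a e (i, w) (i', w')|

/-- The maximal potency `p̃(a,e)` over subsets of the edges of `Γ`. -/
def potencyTilde (d h n : ℕ) (H : SimpleGraph (Fin h)) (a : Fin h → ℝ → ℕ)
    (e : Fin h → ℝ → Fin h → ℝ → ℕ) : ℝ :=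
  sSup {r : ℝ | ∃ E : Set ((Fin h × ℝ) × (Fin h × ℝ)),
    (∀ pq ∈ E, gammaAdj d h n H pq.1 pq.2) ∧
    (∀ p q, (p, q) ∈ E → (q, p) ∈ E) ∧
    r = |(1 / 2 : ℝ) * ∑ i : Fin h, ∑ i' : Fin h, ∑ᶠ w : ℝ, ∑ᶠ w' : ℝ,
        (if ((i, w), (i', w')) ∈ E then potTerm d h n H a e (i, w) (i', w') else 0)|}

/-- The type of the sub-pattern `(a,e)_S`, first component. -/
def restrictA {h : ℕ} (S : Set (Fin h × ℝ)) (a : Fin h → ℝ → ℕ) :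
    Fin h → ℝ → ℕ :=
  fun i w => if (i, w) ∈ S then a i w else 0

/-- The edge counts of the sub-pattern `(a,e)_S`, second component. -/
def restrictE {h : ℕ} (S : Set (Fin h × ℝ)) (e : Fin h → ℝ → Fin h → ℝ → ℕ) :
    Fin h → ℝ → Fin h → ℝ → ℕ :=
  fun i w i' w' => if (i, w) ∈ S ∧ (i', w') ∈ S then e i w i' w' else 0

/-- `A_{i,w}(y) = {v ∈ V_i : y_v = w}`. -/
def Aset {h n : ℕ} (y : Fin h × Fin n → ℝ) (i : Fin h) (w : ℝ) :
    Finset (Fin h × Fin n) :=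
  letI := Classical.decPred fun v : Fin h × Fin n => v.1 = i ∧ y v = w
  Finset.univ.filter fun v => v.1 = i ∧ y v = w

/-- The number of edges of `G` between the sets `A` and `B`. -/
def edgeCount {h n : ℕ} (G : SimpleGraph (Fin h × Fin n))
    (A B : Finset (Fin h × Fin n)) : ℕ :=
  letI := Classical.decPred fun pq : (Fin h × Fin n) × (Fin h × Fin n) => G.Adj pq.1 pq.2
  ((A ×ˢ B).filter fun pq => G.Adj pq.1 pq.2).card

/-- The pattern `(a,e)` can be found in `G` (with some witness `y ∈ Z`). -/
def canFind (d h n : ℕ) (H : SimpleGraph (Fin h)) (G : SimpleGraph (Fin h × Fin n))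
    (a : Fin h → ℝ → ℕ) (e : Fin h → ℝ → Fin h → ℝ → ℕ) : Prop :=
  ∃ y : Fin h × Fin n → ℝ, memZ d h n y ∧
    (∀ i : Fin h, ∀ w ∈ Dpos n h, a i w = (Aset y i w).card) ∧
    (∀ i w i' w', H.Adj i i' → w ∈ Dpos n h → w' ∈ Dpos n h →
      e i w i' w' = edgeCount G (Aset y i w) (Aset y i' w'))

/-- The normalised deviation `ε_{i,w,i',w'}` of a pattern. -/
def epsP {h : ℕ} (n : ℕ) (a : Fin h → ℝ → ℕ) (e : Fin h → ℝ → Fin h → ℝ → ℕ)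
    (p q : Fin h × ℝ) : ℝ :=
  if a p.1 p.2 = 0 ∨ a q.1 q.2 = 0 then 1
  else (e p.1 p.2 q.1 q.2 : ℝ) / ((a p.1 p.2 : ℝ) * (a q.1 q.2 : ℝ) / n) - 1

/-- `b(ε) = (1+ε)log(1+ε) − ε` (with `b(−1)=1`, automatic as `log 0 = 0`). -/
def bFun (x : ℝ) : ℝ := (1 + x) * Real.log (1 + x) - x

/-- The adjacency relation of the large-deviations graph `Γ_LD`. -/
def gammaLDAdj (d h n : ℕ) (H : SimpleGraph (Fin h)) (a : Fin h → ℝ → ℕ)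
    (e : Fin h → ℝ → Fin h → ℝ → ℕ) (p q : Fin h × ℝ) : Prop :=
  gammaAdj d h n H p q ∧ Real.exp 2 - 1 < epsP n a e p q

/-- The adjacency relation of the small-deviations graph `Γ_SD`. -/
def gammaSDAdj (d h n : ℕ) (H : SimpleGraph (Fin h)) (a : Fin h → ℝ → ℕ)
    (e : Fin h → ℝ → Fin h → ℝ → ℕ) (p q : Fin h × ℝ) : Prop :=
  gammaAdj d h n H p q ∧ epsP n a e p q ≤ Real.exp 2 - 1

/-- The summand `w w' (a_{i,w}a_{i',w'}/n) ε_{i,w,i',w'}` over `Γ_LD`. -/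
def potTermLD (d h n : ℕ) (H : SimpleGraph (Fin h)) (a : Fin h → ℝ → ℕ)
    (e : Fin h → ℝ → Fin h → ℝ → ℕ) (p q : Fin h × ℝ) : ℝ :=
  if gammaLDAdj d h n H a e p q then
    p.2 * q.2 * ((a p.1 p.2 : ℝ) * (a q.1 q.2 : ℝ) / n) * epsP n a e p q
  else 0

/-- The summand `w w' (a_{i,w}a_{i',w'}/n) ε_{i,w,i',w'}` over `Γ_SD`. -/
def potTermSD (d h n : ℕ) (H : SimpleGraph (Fin h)) (a : Fin h → ℝ → ℕ)
    (e : Fin h → ℝ → Fin h → ℝ → ℕ) (p q : Fin h × ℝ) : ℝ :=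
  if gammaSDAdj d h n H a e p q then
    p.2 * q.2 * ((a p.1 p.2 : ℝ) * (a q.1 q.2 : ℝ) / n) * epsP n a e p q
  else 0

/-- The large-deviations potency `p_LD(a,e)`. -/
def pLD (d h n : ℕ) (H : SimpleGraph (Fin h)) (a : Fin h → ℝ → ℕ)
    (e : Fin h → ℝ → Fin h → ℝ → ℕ) : ℝ :=
  |(1 / 2 : ℝ) * ∑ i : Fin h, ∑ i' : Fin h, ∑ᶠ w : ℝ, ∑ᶠ w' : ℝ,
      potTermLD d h n H a e (i, w) (i', w')|

/-- The small-deviations potency `p_SD(a,e)`. -/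
def pSD (d h n : ℕ) (H : SimpleGraph (Fin h)) (a : Fin h → ℝ → ℕ)
    (e : Fin h → ℝ → Fin h → ℝ → ℕ) : ℝ :=
  |(1 / 2 : ℝ) * ∑ i : Fin h, ∑ i' : Fin h, ∑ᶠ w : ℝ, ∑ᶠ w' : ℝ,
      potTermSD d h n H a e (i, w) (i', w')|

/-- The local large-deviations potency `p_LD((a,e);(i,w))`. -/
def pLDlocal (d h n : ℕ) (H : SimpleGraph (Fin h)) (a : Fin h → ℝ → ℕ)
    (e : Fin h → ℝ → Fin h → ℝ → ℕ) (p : Fin h × ℝ) : ℝ :=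
  |∑ i' : Fin h, ∑ᶠ w' : ℝ, potTermLD d h n H a e p (i', w')|

/-- The weighted neighbourhood mass `N̂_{i,w}(a,e)`. -/
def Nhat (d h n : ℕ) (H : SimpleGraph (Fin h)) (a : Fin h → ℝ → ℕ)
    (p : Fin h × ℝ) : ℝ :=
  ∑ i' : Fin h, ∑ᶠ w' : ℝ,
    (if gammaAdj d h n H p (i', w') then
      w' ^ 2 * (a i' w' : ℝ) * (w' / (p.2 * Real.sqrt d)) else 0)

/-- Condition (LD1) for a set `U ⊆ V(Γ)`. -/
def condLD1 (d h n : ℕ) (H : SimpleGraph (Fin h)) (L : ℝ) (a : Fin h → ℝ → ℕ)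
    (e : Fin h → ℝ → Fin h → ℝ → ℕ) (U : Set (Fin h × ℝ)) : Prop :=
  ∀ p ∈ U, L * (a p.1 p.2 : ℝ) * p.2 ^ 2 * Real.sqrt d ≤
    pLDlocal d h n H (restrictA U a) (restrictE U e) p

/-- Condition (LD2) for a set `U ⊆ V(Γ)`. -/
def condLD2 (d h n : ℕ) (H : SimpleGraph (Fin h)) (L : ℝ) (a : Fin h → ℝ → ℕ)
    (e : Fin h → ℝ → Fin h → ℝ → ℕ) (U : Set (Fin h × ℝ)) : Prop :=
  ∀ p ∈ U, L * Nhat d h n H a p / Real.sqrt d ≤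
    pLDlocal d h n H (restrictA U a) (restrictE U e) p

/-- `Π_{(i,w)∈S, a_{i,w}≥1} a_{i,w}^{d/4}`. -/
def prodA {h : ℕ} (d : ℕ) (S : Set (Fin h × ℝ)) (a : Fin h → ℝ → ℕ) : ℝ :=
  ∏ᶠ (p : Fin h × ℝ) (_ : p ∈ S ∧ 1 ≤ a p.1 p.2),
    ((a p.1 p.2 : ℝ) ^ ((d : ℝ) / 4))

/-- `Π_{(i,w)∈S, a_{i,w}≥1} C(n, min(a_{i,w}, ⌊n/2⌋))`. -/
def prodChoose {h : ℕ} (n : ℕ) (S : Set (Fin h × ℝ)) (a : Fin h → ℝ → ℕ) : ℝ :=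
  ∏ᶠ (p : Fin h × ℝ) (_ : p ∈ S ∧ 1 ≤ a p.1 p.2),
    ((n.choose (min (a p.1 p.2) (n / 2)) : ℝ))

/-- The number of matching edges between `A` and `B` under the bijection `M`. -/
def matchCount {n : ℕ} (M : Equiv.Perm (Fin n)) (A B : Finset (Fin n)) : ℕ :=
  (A.filter fun v => M v ∈ B).card

end

end RandomLifts

/-!
Let `x` be an eigenvector of `G′` for the eigenvalue `μ`, and let `f ≥ 0` be `|x|` extended by
zero to `V(G)`; the Rayleigh quotient of `f` in `G` is at least `μ`. The vector
`g = f - (fibre averages of f)` is balanced. Averaging over fibres commutes with the adjacency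
matrix of a lift, since each block between two fibres is a permutation matrix or zero, so the
balanced vectors form an invariant subspace and the Rayleigh quotient of `g` is at most `λ*(G)`.
As `H` is loopless and `f ≥ 0`, removing the fibre averages costs at most
`(∑ f)² / n ≤ |V(G′)| ‖f‖² / n ≤ ‖f‖²` in the quadratic form, whence `λ(G′) ≤ λ*(G) + 1`.
-/

namespace Matrix.IsHermitian

variable {V : Type*} [Fintype V] [DecidableEq V] {A : Matrix V V ℝ}

lemma dotProduct_eq_sum_eigenvectorBasis (hA : A.IsHermitian) (x y : V → ℝ) :
    x ⬝ᵥ y = ∑ k, (x ⬝ᵥ hA.eigenvectorBasis k) * (y ⬝ᵥ hA.eigenvectorBasis k) := by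
  have := hA.eigenvectorBasis.sum_inner_mul_inner (WithLp.toLp 2 x) (WithLp.toLp 2 y)
  simp only [EuclideanSpace.inner_eq_star_dotProduct, star_trivial] at this
  rw [dotProduct_comm, ← this]
  exact Finset.sum_congr rfl fun k _ => by rw [dotProduct_comm _ x]

lemma mulVec_dotProduct_eigenvectorBasis (hA : A.IsHermitian) (x : V → ℝ) (k : V) :
    A *ᵥ x ⬝ᵥ hA.eigenvectorBasis k = hA.eigenvalues k * (x ⬝ᵥ hA.eigenvectorBasis k) := by
  rw [dotProduct_comm, dotProduct_mulVec, ← mulVec_transpose,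
    ← conjTranspose_eq_transpose_of_trivial, hA.eq, hA.mulVec_eigenvectorBasis, smul_dotProduct,
    smul_eq_mul, dotProduct_comm]

lemma dotProduct_mulVec_eq_sum_eigenvalues (hA : A.IsHermitian) (x : V → ℝ) :
    x ⬝ᵥ A *ᵥ x = ∑ k, hA.eigenvalues k * (x ⬝ᵥ hA.eigenvectorBasis k) ^ 2 := by
  rw [hA.dotProduct_eq_sum_eigenvectorBasis]
  refine Finset.sum_congr rfl fun k _ => ?_
  rw [mulVec_dotProduct_eigenvectorBasis]
  ring

/-- Among the eigenvectors of `A` not orthogonal to `x`, take one of largest eigenvalue. -/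
lemma exists_eigenvector_dotProduct_ne_zero (hA : A.IsHermitian) {x : V → ℝ} (hx : x ≠ 0) :
    ∃ (μ : ℝ) (w : V → ℝ), A *ᵥ w = μ • w ∧ x ⬝ᵥ w ≠ 0 ∧ x ⬝ᵥ A *ᵥ x ≤ μ * (x ⬝ᵥ x) := by
  set c : V → ℝ := fun k => x ⬝ᵥ hA.eigenvectorBasis k
  have hxx : x ⬝ᵥ x = ∑ k, c k ^ 2 := by
    simp only [hA.dotProduct_eq_sum_eigenvectorBasis x x, c, sq]
  have hK : (Finset.univ.filter fun k => c k ≠ 0).Nonempty := by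
    by_contra hK
    simp only [Finset.not_nonempty_iff_eq_empty, Finset.filter_eq_empty_iff, Finset.mem_univ,
      not_not, true_imp_iff] at hK
    exact hx (dotProduct_self_eq_zero.mp (by simp [hxx, hK]))
  obtain ⟨k, hk, hmax⟩ := Finset.exists_max_image _ hA.eigenvalues hK
  refine ⟨hA.eigenvalues k, hA.eigenvectorBasis k, hA.mulVec_eigenvectorBasis k,
    (Finset.mem_filter.mp hk).2, ?_⟩
  rw [hA.dotProduct_mulVec_eq_sum_eigenvalues, hxx, Finset.mul_sum]
  refine Finset.sum_le_sum fun j _ => ?_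
  by_cases hj : c j = 0
  · simp [c, hj]
  · exact mul_le_mul_of_nonneg_right (hmax j (by simpa using hj)) (sq_nonneg _)

end Matrix.IsHermitian

namespace RandomLifts

open Matrix

lemma adjMat_comm {V : Type*} (G : SimpleGraph V) (u v : V) : adjMat G u v = adjMat G v u := by
  simp [adjMat, G.adj_comm]

lemma adjMat_isHermitian {V : Type*} (G : SimpleGraph V) : (adjMat G).IsHermitian := by
  ext u v
  exact adjMat_comm G v u

lemma extend_val_of_notMem {V : Type*} {s : Finset V} (x : ↥(s : Set V) → ℝ) {v : V}
    (hv : v ∉ s) : Function.extend Subtype.val x 0 v = 0 :=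
  Function.extend_apply' _ _ _ fun ⟨a, ha⟩ => hv (ha ▸ a.2)

section InducedSubgraph

variable {V : Type*} [Fintype V]

lemma dotProduct_mulVec_le_abs {M : Matrix V V ℝ} (hM : ∀ u v, 0 ≤ M u v) (x : V → ℝ) :
    x ⬝ᵥ M *ᵥ x ≤ |x| ⬝ᵥ M *ᵥ |x| := by
  simp only [dotProduct, mulVec, Finset.mul_sum, Pi.abs_apply]
  refine Finset.sum_le_sum fun u _ => Finset.sum_le_sum fun v _ => ?_
  calc x u * (M u v * x v) ≤ |x u * (M u v * x v)| := le_abs_self _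
    _ = |x u| * (M u v * |x v|) := by rw [abs_mul, abs_mul, abs_of_nonneg (hM u v)]

lemma sq_sum_le_card_mul_dotProduct_self {s : Finset V} {f : V → ℝ} (hf : ∀ v ∉ s, f v = 0) :
    (∑ v, f v) ^ 2 ≤ s.card * (f ⬝ᵥ f) := by
  rw [← Finset.sum_subset s.subset_univ fun v _ hv => hf v hv]
  refine (sq_sum_le_card_mul_sum_sq).trans (mul_le_mul_of_nonneg_left ?_ (Nat.cast_nonneg _))
  simp only [dotProduct, ← sq]
  exact Finset.sum_le_sum_of_subset_of_nonneg s.subset_univ fun v _ _ => sq_nonneg _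

section Extension

variable {s : Finset V} (x : ↥(s : Set V) → ℝ)

lemma extend_val_dotProduct (z : V → ℝ) :
    Function.extend Subtype.val x 0 ⬝ᵥ z = x ⬝ᵥ fun a => z a := by
  rw [dotProduct, ← Finset.sum_subset s.subset_univ fun v _ hv => by
    rw [extend_val_of_notMem x hv, zero_mul], Finset.sum_subtype s fun _ => Iff.rfl]
  exact Finset.sum_congr rfl fun a _ => by rw [Subtype.val_injective.extend_apply]

lemma extend_val_dotProduct_mulVec (M : Matrix V V ℝ) :
    Function.extend Subtype.val x 0 ⬝ᵥ M *ᵥ Function.extend Subtype.val x 0 =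
      x ⬝ᵥ M.submatrix Subtype.val Subtype.val *ᵥ x := by
  rw [extend_val_dotProduct]
  congr 1
  funext a
  rw [mulVec, dotProduct_comm, extend_val_dotProduct]
  exact dotProduct_comm _ _

end Extension

lemma exists_nonneg_le_rayleigh_of_induce {G : SimpleGraph V} {s : Finset V} {μ : ℝ}
    {x : ↥(s : Set V) → ℝ} (hx : x ≠ 0) (heig : adjMat (G.induce (s : Set V)) *ᵥ x = μ • x) :
    ∃ f : V → ℝ, 0 ≤ f ∧ (∀ v ∉ s, f v = 0) ∧ 0 < f ⬝ᵥ f ∧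
      μ * (f ⬝ᵥ f) ≤ f ⬝ᵥ adjMat G *ᵥ f := by
  set y := Function.extend Subtype.val x 0
  have hyy : |y| ⬝ᵥ |y| = x ⬝ᵥ x := by
    simp only [dotProduct, Pi.abs_apply, abs_mul_abs_self]
    exact extend_val_dotProduct x y |>.trans (by simp [y, dotProduct])
  refine ⟨|y|, abs_nonneg y, fun v hv => by simp [y, extend_val_of_notMem x hv], ?_, ?_⟩
  · rw [hyy]
    exact lt_of_le_of_ne (Finset.sum_nonneg fun _ _ => mul_self_nonneg _)
      (Ne.symm (dotProduct_self_eq_zero.not.mpr hx))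
  · calc μ * (|y| ⬝ᵥ |y|) = y ⬝ᵥ adjMat G *ᵥ y := by
          rw [hyy, extend_val_dotProduct_mulVec, ← smul_eq_mul, ← dotProduct_smul, ← heig]
          rfl
      _ ≤ |y| ⬝ᵥ adjMat G *ᵥ |y| :=
          dotProduct_mulVec_le_abs (fun u v => by unfold adjMat; split <;> norm_num) y

end InducedSubgraph

section Fibres

variable {h n : ℕ}

def fibreSum (x : Fin h × Fin n → ℝ) (i : Fin h) : ℝ := ∑ j, x (i, j)

noncomputable def fibreMean (x : Fin h × Fin n → ℝ) : Fin h × Fin n → ℝ :=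
  fun v => fibreSum x v.1 / n

lemma fibreSum_fibreMean (x : Fin h × Fin n → ℝ) (i : Fin h) :
    fibreSum (fibreMean x) i = fibreSum x i := by
  rcases Nat.eq_zero_or_pos n with rfl | hn
  · simp [fibreSum]
  · simp only [fibreSum, fibreMean, Finset.sum_const, Finset.card_univ, Fintype.card_fin,
      nsmul_eq_mul]
    field_simp

lemma fibreSum_sub_fibreMean (x : Fin h × Fin n → ℝ) (i : Fin h) :
    fibreSum (x - fibreMean x) i = 0 := by
  rw [← sub_self (fibreSum x i)]
  nth_rw 2 [← fibreSum_fibreMean x i]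
  exact Finset.sum_sub_distrib _ _

lemma fibreMean_smul (c : ℝ) (x : Fin h × Fin n → ℝ) : fibreMean (c • x) = c • fibreMean x := by
  funext v
  simp [fibreMean, fibreSum, ← Finset.mul_sum, mul_div_assoc]

lemma fibreMean_dotProduct (x y : Fin h × Fin n → ℝ) :
    fibreMean x ⬝ᵥ y = ∑ i, fibreSum x i / n * fibreSum y i := by
  simp [dotProduct, Fintype.sum_prod_type, fibreMean, fibreSum, Finset.mul_sum]

lemma fibreMean_dotProduct_eq_zero (x : Fin h × Fin n → ℝ) {y : Fin h × Fin n → ℝ}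
    (hy : ∀ i, fibreSum y i = 0) : fibreMean x ⬝ᵥ y = 0 := by
  simp [fibreMean_dotProduct, hy]

end Fibres

section Lift

variable {h n : ℕ} (H : SimpleGraph (Fin h)) (ω : LiftSpace h n)

lemma exists_perm_liftGraph_adj_iff {v : Fin h × Fin n} {i' : Fin h} (hadj : H.Adj v.1 i') :
    ∃ σ : Equiv.Perm (Fin n), ∀ j, (liftGraph H ω).Adj v (i', j) ↔ j = σ v.2 := by
  rcases lt_or_gt_of_ne (H.ne_of_adj hadj) with hlt | hgt
  · exact ⟨ω v.1 i', fun j => by simp [liftGraph, hadj, hlt, hlt.not_gt]⟩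
  · refine ⟨(ω i' v.1).symm, fun j => ?_⟩
    simp [liftGraph, hadj, hgt, hgt.not_gt, Equiv.eq_symm_apply, eq_comm]

lemma sum_adjMat_liftGraph_fibre (v : Fin h × Fin n) (i' : Fin h) :
    ∑ j, adjMat (liftGraph H ω) v (i', j) = if H.Adj v.1 i' then 1 else 0 := by
  by_cases hadj : H.Adj v.1 i'
  · obtain ⟨σ, hσ⟩ := exists_perm_liftGraph_adj_iff H ω hadj
    simp [adjMat, hσ, hadj]
  · simp only [adjMat, hadj, if_false]
    exact Finset.sum_eq_zero fun j _ => if_neg fun h => hadj h.1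

lemma fibreSum_adjMat_mulVec (x : Fin h × Fin n → ℝ) (i : Fin h) :
    fibreSum (adjMat (liftGraph H ω) *ᵥ x) i = ∑ i', if H.Adj i i' then fibreSum x i' else 0 := by
  have hcol (u : Fin h × Fin n) :
      ∑ j, adjMat (liftGraph H ω) (i, j) u = if H.Adj i u.1 then 1 else 0 := by
    simp_rw [adjMat_comm _ (i, _) u, sum_adjMat_liftGraph_fibre, H.adj_comm]
  simp only [fibreSum, mulVec, dotProduct]
  rw [Finset.sum_comm]
  simp_rw [← Finset.sum_mul, hcol, Fintype.sum_prod_type, ite_mul, one_mul, zero_mul]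
  exact Finset.sum_congr rfl fun i' _ => by rw [Finset.sum_ite_irrel, Finset.sum_const_zero]

lemma adjMat_mulVec_fibreMean (x : Fin h × Fin n → ℝ) :
    adjMat (liftGraph H ω) *ᵥ fibreMean x = fibreMean (adjMat (liftGraph H ω) *ᵥ x) := by
  funext v
  simp only [fibreMean, fibreSum_adjMat_mulVec, mulVec, dotProduct, Fintype.sum_prod_type]
  simp_rw [← Finset.sum_mul, sum_adjMat_liftGraph_fibre, Finset.sum_div, ite_mul, one_mul,
    zero_mul, ite_div, zero_div]

lemma abs_le_lambdaStar {G : SimpleGraph (Fin h × Fin n)} {μ : ℝ} {x : Fin h × Fin n → ℝ}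
    (hx : x ≠ 0) (heig : adjMat G *ᵥ x = μ • x) (hbal : ∀ i, fibreSum x i = 0) :
    |μ| ≤ lambdaStar G := by
  refine le_csSup ?_ ⟨μ, x, hx, heig, hbal, rfl⟩
  refine ((Module.End.finite_hasEigenvalue (toLin' (adjMat G))).image abs).bddAbove.mono ?_
  rintro _ ⟨μ, x, hx, heig, -, rfl⟩
  exact ⟨μ, Module.End.hasEigenvalue_of_hasEigenvector
    ⟨Module.End.mem_eigenspace_iff.mpr (by rw [toLin'_apply, heig]), hx⟩, rfl⟩

lemma lambdaStar_nonneg (G : SimpleGraph (Fin h × Fin n)) : 0 ≤ lambdaStar G :=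
  Real.sSup_nonneg <| by
    rintro _ ⟨μ, -, -, -, -, rfl⟩
    exact abs_nonneg μ

/-- Fibre averaging commutes with the adjacency matrix, so removing the fibre averages from an
eigenvector not orthogonal to `g` leaves a balanced eigenvector. -/
lemma dotProduct_mulVec_le_lambdaStar_mul {g : Fin h × Fin n → ℝ} (hg : ∀ i, fibreSum g i = 0) :
    g ⬝ᵥ adjMat (liftGraph H ω) *ᵥ g ≤ lambdaStar (liftGraph H ω) * (g ⬝ᵥ g) := by
  rcases eq_or_ne g 0 with rfl | hg0
  · simp
  obtain ⟨μ, w, hw, hgw, hray⟩ :=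
    (adjMat_isHermitian _).exists_eigenvector_dotProduct_ne_zero hg0
  set y := w - fibreMean w
  have hy : adjMat (liftGraph H ω) *ᵥ y = μ • y := by
    rw [mulVec_sub, adjMat_mulVec_fibreMean, hw, fibreMean_smul, smul_sub]
  have hgy : g ⬝ᵥ y = g ⬝ᵥ w := by
    rw [dotProduct_sub, dotProduct_comm g (fibreMean w), fibreMean_dotProduct_eq_zero w hg,
      sub_zero]
  have hy0 : y ≠ 0 := by
    rintro hy0
    rw [hy0, dotProduct_zero] at hgy
    exact hgw hgy.symm
  have hμ : μ ≤ lambdaStar (liftGraph H ω) :=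
    (le_abs_self μ).trans (abs_le_lambdaStar hy0 hy (fibreSum_sub_fibreMean w))
  exact hray.trans (mul_le_mul_of_nonneg_right hμ (Finset.sum_nonneg fun _ _ => mul_self_nonneg _))

/-- As `H` has no loops, `u i + ∑_{i' ~ i} u i' ≤ ∑ u` for the nonnegative fibre sums `u`. -/
lemma fibreMean_dotProduct_mulVec_add_le {f : Fin h × Fin n → ℝ} (hf : 0 ≤ f) :
    fibreMean f ⬝ᵥ adjMat (liftGraph H ω) *ᵥ f + fibreMean f ⬝ᵥ f ≤ (∑ v, f v) ^ 2 / n := by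
  set u := fibreSum f
  have hu : ∀ i, 0 ≤ u i := fun i => Finset.sum_nonneg fun j _ => hf (i, j)
  have hrow (i : Fin h) : (∑ i', if H.Adj i i' then u i' else 0) + u i ≤ ∑ i', u i' := by
    rw [← Fintype.sum_ite_eq i u, ← Finset.sum_add_distrib]
    refine Finset.sum_le_sum fun i' _ => ?_
    by_cases hii : i = i'
    · simp [hii]
    · by_cases hadj : H.Adj i i' <;> simp [hadj, hii, hu i']
  rw [fibreMean_dotProduct, fibreMean_dotProduct, ← Finset.sum_add_distrib, Fintype.sum_prod_type,
    sq, Finset.sum_mul, Finset.sum_div]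
  refine Finset.sum_le_sum fun i _ => ?_
  simp_rw [fibreSum_adjMat_mulVec, ← mul_add, div_mul_eq_mul_div]
  exact div_le_div_of_nonneg_right (mul_le_mul_of_nonneg_left (hrow i) (hu i)) (Nat.cast_nonneg n)

lemma le_lambdaStar_add_one {f : Fin h × Fin n → ℝ} {μ : ℝ} (hf : 0 ≤ f)
    (hspread : (∑ v, f v) ^ 2 ≤ n * (f ⬝ᵥ f)) (hpos : 0 < f ⬝ᵥ f)
    (hμ : μ * (f ⬝ᵥ f) ≤ f ⬝ᵥ adjMat (liftGraph H ω) *ᵥ f) :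
    μ ≤ lambdaStar (liftGraph H ω) + 1 := by
  set g := f - fibreMean f
  have hbal : ∀ i, fibreSum g i = 0 := fibreSum_sub_fibreMean f
  have hgg : g ⬝ᵥ g = f ⬝ᵥ f - fibreMean f ⬝ᵥ f := by
    rw [dotProduct_sub g, dotProduct_comm g (fibreMean f), fibreMean_dotProduct_eq_zero f hbal,
      sub_zero, sub_dotProduct]
  have hgAg : g ⬝ᵥ adjMat (liftGraph H ω) *ᵥ g =
      f ⬝ᵥ adjMat (liftGraph H ω) *ᵥ f - fibreMean f ⬝ᵥ adjMat (liftGraph H ω) *ᵥ f := by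
    rw [mulVec_sub, dotProduct_sub, adjMat_mulVec_fibreMean, dotProduct_comm g (fibreMean _),
      fibreMean_dotProduct_eq_zero _ hbal, sub_zero, sub_dotProduct]
  have hstar := dotProduct_mulVec_le_lambdaStar_mul H ω hbal
  have hmean := fibreMean_dotProduct_mulVec_add_le H ω hf
  have hmean_nonneg : 0 ≤ fibreMean f ⬝ᵥ f := dotProduct_nonneg_of_nonneg
    (fun v => div_nonneg (Finset.sum_nonneg fun j _ => hf _) (Nat.cast_nonneg n)) hf
  have hspread' : (∑ v, f v) ^ 2 / n ≤ f ⬝ᵥ f :=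
    div_le_of_le_mul₀ (Nat.cast_nonneg n) hpos.le (by linarith)
  have hstar_nonneg := lambdaStar_nonneg (liftGraph H ω)
  rw [hgAg, hgg] at hstar
  have key : μ * (f ⬝ᵥ f) ≤ (lambdaStar (liftGraph H ω) + 1) * (f ⬝ᵥ f) := by nlinarith
  exact le_of_mul_le_mul_right key hpos

lemma lambdaMax_induce_le_lambdaStar_add_one (s : Finset (Fin h × Fin n)) (hs : s.card ≤ n) :
    lambdaMax ((liftGraph H ω).induce (s : Set (Fin h × Fin n))) ≤
      lambdaStar (liftGraph H ω) + 1 := by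
  refine Real.sSup_le ?_ (by linarith [lambdaStar_nonneg (liftGraph H ω)])
  rintro μ ⟨x, hx, heig⟩
  obtain ⟨f, hf, hsupp, hpos, hμ⟩ := exists_nonneg_le_rayleigh_of_induce hx heig
  refine le_lambdaStar_add_one H ω hf ?_ hpos hμ
  exact (sq_sum_le_card_mul_dotProduct_self hsupp).trans
    (mul_le_mul_of_nonneg_right (by exact_mod_cast hs) hpos.le)

end Lift

theorem statement2_general (h n : ℕ) (H : SimpleGraph (Fin h)) (ω : LiftSpace h n)
    (s : Finset (Fin h × Fin n))
    (hs : (s.card : ℝ) ≤ (n : ℝ) - (h : ℝ) * Real.sqrt n) :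
    lambdaMax ((liftGraph H ω).induce (↑s : Set (Fin h × Fin n))) - 7 / 2 ≤
      lambdaStar (liftGraph H ω) := by
  have hcard : s.card ≤ n := by
    have : 0 ≤ (h : ℝ) * Real.sqrt n := by positivity
    exact_mod_cast hs.trans (sub_le_self _ this)
  linarith [lambdaMax_induce_le_lambdaStar_add_one H ω s hcard]

theorem statement2 (d h n : ℕ) (hd : 2 ≤ d) (hn : 1 ≤ n) (H : SimpleGraph (Fin h))
    [DecidableRel H.Adj] (hreg : H.IsRegularOfDegree d) (ω : LiftSpace h n)
    (s : Finset (Fin h × Fin n))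
    (hs : (s.card : ℝ) ≤ (n : ℝ) - (h : ℝ) * Real.sqrt n) :
    lambdaMax ((liftGraph H ω).induce (↑s : Set (Fin h × Fin n))) - 7 / 2 ≤
      lambdaStar (liftGraph H ω) :=
  statement2_general h n H ω s hs

end RandomLifts
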